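/- arXiv:1406.3665 — 2 statements merged into one kernel-verified Lean document; each statement's English description precedes it below -/
import Mathlib

section
/- For each i = 1,…,n let X_i ⊆ ℝ^{m_i} be a nonempty closed convex set, X = ∏_{i=1}^n X_i ⊆ ℝ^N (N = m_1 + … + m_n), let g_i : ℝ^{m_i} → ℝ be convex, and let f̃_i : X_i × X → ℝ be such that f̃_i(·,y) is continuously differentiable and τ-strongly convex on X_i for every y ∈ X, and ‖∇_{x_i} f̃_i(x_i,y) − ∇_{x_i} f̃_i(x_i,z)‖ ≤ L̃‖y − z‖ for all y, z ∈ X and all x_i ∈ X_i. Define the best-response map x̂ : X → X by x̂(y) = (x̂_1(y),…,x̂_n(y)) with x̂_i(y) = argmin_{x_i ∈ X_i} f̃_i(x_i,y) + g_i(x_i). Then x̂ is Lipschitz continuous with constant L̂ = √n L̃/τ, i.e. ‖x̂(y) − x̂(z)‖ ≤ (√n L̃/τ)‖y − z‖ for all y, z ∈ X. -/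
/-!
Write `F_y := f̃_i(·, y) + g_i`. It is `τ`-strongly convex, so at its minimiser `u = x̂_i(y)` it
grows quadratically: `F_y u + τ/2 ‖x - u‖² ≤ F_y x` on `X_i`. Adding this inequality for `F_y` at
`v = x̂_i(z)` to the one for `F_z` at `u` cancels `g_i` and gives
`τ ‖u - v‖² ≤ (f̃_i(·, y) - f̃_i(·, z))(v) - (f̃_i(·, y) - f̃_i(·, z))(u) ≤ L̃ ‖y - z‖ ‖u - v‖`,
the last step by the mean value inequality. So each block moves by at most `L̃ ‖y - z‖ / τ`,
and summing the squares of the `n` blocks gives the factor `√n`.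
-/

open scoped RealInnerProductSpace
open Filter Topology Finset

noncomputable section

/-- The product space `ℝ^N = ℝ^{m_1} × … × ℝ^{m_n}` with the Euclidean norm, so that
`‖x‖² = Σ_i ‖x i‖²`. -/
abbrev TS (n : ℕ) (m : Fin n → ℕ) := PiLp 2 fun j => EuclideanSpace ℝ (Fin (m j))

section StrongConvexity

variable {E : Type*} [NormedAddCommGroup E] [InnerProductSpace ℝ E] {s : Set E} {m : ℝ}

theorem strongConvexOn_of_forall_add_inner_le (hs : Convex ℝ s) {f : E → ℝ} (d : E → E)
    (h : ∀ u ∈ s, ∀ u' ∈ s, f u ≥ f u' + ⟪d u', u - u'⟫ + m / 2 * ‖u - u'‖ ^ 2) :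
    StrongConvexOn s m f := by
  refine ⟨hs, fun x hx y hy a b ha hb hab => ?_⟩
  obtain rfl : b = 1 - a := by linarith
  set w := a • x + (1 - a) • y
  have hw : w ∈ s := hs hx hy ha hb hab
  have hxw : x - w = (1 - a) • (x - y) := by module
  have hyw : y - w = (-a) • (x - y) := by module
  have hx' := h x hx w hw
  have hy' := h y hy w hw
  rw [hxw, real_inner_smul_right, norm_smul, Real.norm_eq_abs, mul_pow, sq_abs] at hx'
  rw [hyw, real_inner_smul_right, norm_smul, Real.norm_eq_abs, mul_pow, sq_abs] at hy'
  simp only [smul_eq_mul]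
  nlinarith [mul_le_mul_of_nonneg_left hx' ha, mul_le_mul_of_nonneg_left hy' hb]

theorem StrongConvexOn.add_convexOn {f g : E → ℝ} (hf : StrongConvexOn s m f)
    (hg : ConvexOn ℝ s g) : StrongConvexOn s m (f + g) := by
  simpa [StrongConvexOn] using hf.add hg.uniformConvexOn_zero

theorem StrongConvexOn.add_mul_sq_norm_sub_le_of_isMinOn {F : E → ℝ} {u x : E}
    (hF : StrongConvexOn s m F) (hmin : IsMinOn F s u) (hu : u ∈ s) (hx : x ∈ s) :
    F u + m / 2 * ‖x - u‖ ^ 2 ≤ F x := by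
  have along_segment : ∀ t ∈ Set.Ioc (0 : ℝ) 1, F u + (1 - t) * (m / 2 * ‖x - u‖ ^ 2) ≤ F x := by
    rintro t ⟨ht0, ht1⟩
    have hconv := hF.2 hx hu ht0.le (sub_nonneg.2 ht1) (add_sub_cancel t 1)
    have hle : F u ≤ F (t • x + (1 - t) • u) := hmin (hF.1 hx hu ht0.le (by linarith) (by ring))
    simp only [smul_eq_mul] at hconv
    nlinarith
  have hlim : Tendsto (fun t : ℝ => F u + (1 - t) * (m / 2 * ‖x - u‖ ^ 2)) (𝓝[>] 0)
      (𝓝 (F u + (1 - 0) * (m / 2 * ‖x - u‖ ^ 2))) :=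
    (Continuous.tendsto (by fun_prop) 0).mono_left nhdsWithin_le_nhds
  simpa using le_of_tendsto hlim
    (eventually_of_mem (Ioc_mem_nhdsGT zero_lt_one) along_segment)

theorem StrongConvexOn.mul_norm_sub_le_of_isMinOn {F₁ F₂ : E → ℝ} {u v : E} {C : ℝ}
    (hC : 0 ≤ C) (hF₁ : StrongConvexOn s m F₁) (hF₂ : StrongConvexOn s m F₂)
    (hmin₁ : IsMinOn F₁ s u) (hmin₂ : IsMinOn F₂ s v) (hu : u ∈ s) (hv : v ∈ s)
    (hdiff : (F₁ v - F₂ v) - (F₁ u - F₂ u) ≤ C * ‖u - v‖) :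
    m * ‖u - v‖ ≤ C := by
  have h₁ := hF₁.add_mul_sq_norm_sub_le_of_isMinOn hmin₁ hu hv
  have h₂ := hF₂.add_mul_sq_norm_sub_le_of_isMinOn hmin₂ hv hu
  rw [norm_sub_rev v u] at h₁
  have hsq : m * ‖u - v‖ * ‖u - v‖ ≤ C * ‖u - v‖ := by nlinarith
  rcases (norm_nonneg (u - v)).eq_or_lt with h0 | hpos
  · rw [← h0, mul_zero]; exact hC
  · exact le_of_mul_le_mul_right hsq hpos

end StrongConvexity

section Gradient

variable {E : Type*} [NormedAddCommGroup E] [InnerProductSpace ℝ E] [CompleteSpace E]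
  {s : Set E}

theorem Convex.norm_image_sub_sub_le_of_norm_gradient_sub_le (hs : Convex ℝ s) {f₁ f₂ : E → ℝ}
    {C : ℝ} (hf₁ : ∀ x ∈ s, DifferentiableAt ℝ f₁ x) (hf₂ : ∀ x ∈ s, DifferentiableAt ℝ f₂ x)
    (hC : ∀ x ∈ s, ‖gradient f₁ x - gradient f₂ x‖ ≤ C) {x y : E} (hx : x ∈ s) (hy : y ∈ s) :
    ‖(f₁ y - f₂ y) - (f₁ x - f₂ x)‖ ≤ C * ‖y - x‖ := by
  refine hs.norm_image_sub_le_of_norm_fderiv_le (f := fun w => f₁ w - f₂ w)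
    (fun w hw => (hf₁ w hw).sub (hf₂ w hw)) (fun w hw => ?_) hx hy
  rw [fderiv_fun_sub (hf₁ w hw) (hf₂ w hw), ← (InnerProductSpace.toDual ℝ E).symm.norm_map, map_sub]
  exact hC w hw

theorem norm_sub_le_of_isMinOn_add (hs : Convex ℝ s) {f₁ f₂ g : E → ℝ} {τ C : ℝ} (hτ : 0 < τ)
    (hg : ConvexOn ℝ Set.univ g)
    (hf₁ : ∀ x ∈ s, DifferentiableAt ℝ f₁ x) (hf₂ : ∀ x ∈ s, DifferentiableAt ℝ f₂ x)
    (hsc₁ : ∀ u ∈ s, ∀ u' ∈ s, f₁ u ≥ f₁ u' + ⟪gradient f₁ u', u - u'⟫ + τ / 2 * ‖u - u'‖ ^ 2)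
    (hsc₂ : ∀ u ∈ s, ∀ u' ∈ s, f₂ u ≥ f₂ u' + ⟪gradient f₂ u', u - u'⟫ + τ / 2 * ‖u - u'‖ ^ 2)
    (hC : ∀ x ∈ s, ‖gradient f₁ x - gradient f₂ x‖ ≤ C) {u v : E} (hu : u ∈ s) (hv : v ∈ s)
    (hmin₁ : IsMinOn (fun w => f₁ w + g w) s u) (hmin₂ : IsMinOn (fun w => f₂ w + g w) s v) :
    ‖u - v‖ ≤ C / τ := by
  have hg' : ConvexOn ℝ s g := hg.subset (Set.subset_univ s) hs
  have hF₁ := (strongConvexOn_of_forall_add_inner_le hs _ hsc₁).add_convexOn hg'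
  have hF₂ := (strongConvexOn_of_forall_add_inner_le hs _ hsc₂).add_convexOn hg'
  have hdiff : ((f₁ + g) v - (f₂ + g) v) - ((f₁ + g) u - (f₂ + g) u) ≤ C * ‖u - v‖ := by
    have := hs.norm_image_sub_sub_le_of_norm_gradient_sub_le hf₁ hf₂ hC hu hv
    simp only [Pi.add_apply, add_sub_add_right_eq_sub]
    rw [norm_sub_rev u v]
    exact (le_abs_self _).trans this
  rw [le_div_iff₀ hτ, mul_comm]
  exact hF₁.mul_norm_sub_le_of_isMinOn ((norm_nonneg _).trans (hC u hu)) hF₂ hmin₁ hmin₂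
    hu hv hdiff

end Gradient

theorem PiLp.norm_le_sqrt_card_mul {ι : Type*} [Fintype ι] {β : ι → Type*}
    [∀ i, SeminormedAddCommGroup (β i)] (x : PiLp 2 β) {c : ℝ} (h : ∀ i, ‖x i‖ ≤ c) :
    ‖x‖ ≤ √(Fintype.card ι) * c := by
  cases isEmpty_or_nonempty ι with
  | inl _ => simp [PiLp.norm_eq_of_L2]
  | inr hι =>
    have hc : 0 ≤ c := (norm_nonneg _).trans (h hι.some)
    calc ‖x‖ = √(∑ i, ‖x i‖ ^ 2) := PiLp.norm_eq_of_L2 x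
      _ ≤ √(∑ _i : ι, c ^ 2) := by gcongr with i; exact h i
      _ = √(Fintype.card ι) * c := by
        rw [Finset.sum_const, Finset.card_univ, nsmul_eq_mul, Real.sqrt_mul (Nat.cast_nonneg _),
          Real.sqrt_sq hc]

theorem stmt1_general
    {n : ℕ} {m : Fin n → ℕ}
    (X : ∀ j, Set (EuclideanSpace ℝ (Fin (m j))))
    (hXcv : ∀ j, Convex ℝ (X j))
    (g : ∀ j, EuclideanSpace ℝ (Fin (m j)) → ℝ) (hg : ∀ j, ConvexOn ℝ Set.univ (g j))
    (ft : ∀ j, EuclideanSpace ℝ (Fin (m j)) → TS n m → ℝ)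
    (τ Lt : ℝ) (hτ : 0 < τ)
    -- `f̃_i(·, y)` is continuously differentiable for every `y ∈ X`
    (hC1 : ∀ i, ∀ y : TS n m, (∀ j, y j ∈ X j) → ContDiff ℝ 1 fun u => ft i u y)
    -- `f̃_i(·, y)` is `τ`-strongly convex on `X_i` for every `y ∈ X`
    (hsc : ∀ i, ∀ y : TS n m, (∀ j, y j ∈ X j) → ∀ u ∈ X i, ∀ u' ∈ X i,
      ft i u y ≥ ft i u' y + ⟪gradient (fun v => ft i v y) u', u - u'⟫ + τ / 2 * ‖u - u'‖ ^ 2)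
    -- `‖∇_{x_i} f̃_i(x_i, y) − ∇_{x_i} f̃_i(x_i, z)‖ ≤ L̃ ‖y − z‖`
    (hLip : ∀ i, ∀ xi ∈ X i, ∀ y z : TS n m, (∀ j, y j ∈ X j) → (∀ j, z j ∈ X j) →
      ‖gradient (fun v => ft i v y) xi - gradient (fun v => ft i v z) xi‖ ≤ Lt * ‖y - z‖)
    -- the best-response map `x̂`
    (xhat : TS n m → TS n m)
    (hxhat : ∀ y : TS n m, (∀ j, y j ∈ X j) → ∀ i,
      xhat y i ∈ X i ∧ IsMinOn (fun u => ft i u y + g i u) (X i) (xhat y i)) :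
    ∀ y z : TS n m, (∀ j, y j ∈ X j) → (∀ j, z j ∈ X j) →
      ‖xhat y - xhat z‖ ≤ Real.sqrt n * Lt / τ * ‖y - z‖ := by
  intro y z hy hz
  have block_bound : ∀ i, ‖(xhat y - xhat z) i‖ ≤ Lt * ‖y - z‖ / τ := fun i =>
    norm_sub_le_of_isMinOn_add (hXcv i) hτ (hg i)
      (fun x _ => (hC1 i y hy).differentiable one_ne_zero x)
      (fun x _ => (hC1 i z hz).differentiable one_ne_zero x)
      (hsc i y hy) (hsc i z hz) (fun x hx => hLip i x hx y z hy hz)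
      (hxhat y hy i).1 (hxhat z hz i).1 (hxhat y hy i).2 (hxhat z hz i).2
  calc ‖xhat y - xhat z‖ ≤ √(Fintype.card (Fin n)) * (Lt * ‖y - z‖ / τ) :=
        PiLp.norm_le_sqrt_card_mul _ block_bound
    _ = Real.sqrt n * Lt / τ * ‖y - z‖ := by rw [Fintype.card_fin]; ring

/-- **Lemma 1.** The best-response map `x̂ : X → X`,
`x̂(y) = (x̂_1(y), …, x̂_n(y))` with `x̂_i(y) = argmin_{x_i ∈ X_i} f̃_i(x_i, y) + g_i(x_i)`,
is Lipschitz continuous with constant `L̂ = √n L̃ / τ`. -/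
theorem stmt1
    {n : ℕ} {m : Fin n → ℕ}
    (X : ∀ j, Set (EuclideanSpace ℝ (Fin (m j))))
    (hXne : ∀ j, (X j).Nonempty) (hXcl : ∀ j, IsClosed (X j)) (hXcv : ∀ j, Convex ℝ (X j))
    (g : ∀ j, EuclideanSpace ℝ (Fin (m j)) → ℝ) (hg : ∀ j, ConvexOn ℝ Set.univ (g j))
    (ft : ∀ j, EuclideanSpace ℝ (Fin (m j)) → TS n m → ℝ)
    (τ Lt : ℝ) (hτ : 0 < τ)
    -- `f̃_i(·, y)` is continuously differentiable for every `y ∈ X`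
    (hC1 : ∀ i, ∀ y : TS n m, (∀ j, y j ∈ X j) → ContDiff ℝ 1 fun u => ft i u y)
    -- `f̃_i(·, y)` is `τ`-strongly convex on `X_i` for every `y ∈ X`
    (hsc : ∀ i, ∀ y : TS n m, (∀ j, y j ∈ X j) → ∀ u ∈ X i, ∀ u' ∈ X i,
      ft i u y ≥ ft i u' y + ⟪gradient (fun v => ft i v y) u', u - u'⟫ + τ / 2 * ‖u - u'‖ ^ 2)
    -- `‖∇_{x_i} f̃_i(x_i, y) − ∇_{x_i} f̃_i(x_i, z)‖ ≤ L̃ ‖y − z‖`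
    (hLip : ∀ i, ∀ xi ∈ X i, ∀ y z : TS n m, (∀ j, y j ∈ X j) → (∀ j, z j ∈ X j) →
      ‖gradient (fun v => ft i v y) xi - gradient (fun v => ft i v z) xi‖ ≤ Lt * ‖y - z‖)
    -- the best-response map `x̂`
    (xhat : TS n m → TS n m)
    (hxhat : ∀ y : TS n m, (∀ j, y j ∈ X j) → ∀ i,
      xhat y i ∈ X i ∧ IsMinOn (fun u => ft i u y + g i u) (X i) (xhat y i)) :
    ∀ y z : TS n m, (∀ j, y j ∈ X j) → (∀ j, z j ∈ X j) →
      ‖xhat y - xhat z‖ ≤ Real.sqrt n * Lt / τ * ‖y - z‖ :=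
  stmt1_general X hXcv g hg ft τ Lt hτ hC1 hsc hLip xhat hxhat
end
end

section
/- (Non-asymptotic rate for the proximal gradient under sufficient descent, deterministic form of Theorem 3.) Let X_i ⊆ ℝ^{m_i} be nonempty closed convex, X = ∏_{j=1}^n X_j, f : ℝ^N → ℝ continuously differentiable, g_i convex, h = f + Σ_i g_i with h^* = inf_{x∈X} h(x) > −∞, and let f̃_i(·,x) be continuously differentiable, τ-strongly convex, gradient consistent (∇_{x_i} f̃_i(x_i,x) = ∇_{x_i} f(x)), with ∇_{x_i} f̃_i(·,x) Lipschitz with constant L_i; set L = max_i L_i. Let (x^r)_{r≥0} ⊆ X be any sequence, let x̂^r = x̂(x^r) with x̂_i(x) = argmin_{u∈X_i} f̃_i(u,x) + g_i(u), and suppose there is β̂ > 0 such that h(x^{r+1}) ≤ h(x^r) − β̂‖x̂^r − x^r‖² for every r. Then for every T ≥ 0, Σ_{r=0}^T ‖∇̃h(x^r)‖² ≤ κ, where κ = 2(L² + 2L + 2)(h(x^0) − h^*)/β̂; in particular min_{0 ≤ r ≤ T} ‖∇̃h(x^r)‖² ≤ κ/(T+1), so the first index T_ε with ‖∇̃h(x^{T_ε})‖²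 ≤ ε satisfies T_ε ≤ κ/ε. -/
/-!
The best responses `x̂_i` and the proximal point `y` both minimize a smooth-plus-convex function
over a convex set, hence satisfy variational inequalities. Adding the two and using gradient
consistency together with the Lipschitz bound gives `‖x − y‖² ≤ (L² + 4L + 1)‖x̂ − x‖²` at every
step. Summing the sufficient-descent inequality telescopes to `β Σ_r ‖x̂^r − x^r‖² ≤ h(x⁰) − h^*`,
and the two rates follow by averaging.
-/

open scoped RealInnerProductSpace
open Filter Topology Finset

noncomputable section

lemma le_of_forall_mem_Ioc_le_add_mul {a b C : ℝ} (h : ∀ t ∈ Set.Ioc (0 : ℝ) 1, a ≤ b + t * C) :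
    a ≤ b := by
  have hlim : Tendsto (fun t : ℝ => b + t * C) (𝓝[>] 0) (𝓝 b) := by
    refine tendsto_nhdsWithin_of_tendsto_nhds ?_
    exact Continuous.tendsto' (by fun_prop) 0 b (by simp)
  exact ge_of_tendsto hlim (eventually_of_mem (Ioc_mem_nhdsGT zero_lt_one) h)

section FirstOrder

variable {E : Type*} [NormedAddCommGroup E] [InnerProductSpace ℝ E]
  {S : Set E} {F G : E → ℝ} {p u : E}

lemma IsMinOn.sub_le_inner_of_convexOn {v : E} {C : ℝ} (hG : ConvexOn ℝ S G)
    (hmin : IsMinOn (fun z => F z + G z) S p) (hp : p ∈ S) (hu : u ∈ S)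
    (hF : ∀ t ∈ Set.Ioc (0 : ℝ) 1, F (p + t • (u - p)) ≤ F p + t * ⟪v, u - p⟫ + t ^ 2 * C) :
    G p - G u ≤ ⟪v, u - p⟫ := by
  refine le_of_forall_mem_Ioc_le_add_mul (C := C) fun t ht => ?_
  have hq : p + t • (u - p) ∈ S := hG.1.add_smul_sub_mem hp hu (Set.Ioc_subset_Icc_self ht)
  have hGq : G (p + t • (u - p)) ≤ (1 - t) * G p + t * G u := by
    have := hG.2 hp hu (sub_nonneg.2 ht.2) ht.1.le (sub_add_cancel 1 t)
    rwa [show (1 - t) • p + t • u = p + t • (u - p) by module] at this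
  have hFq := hF t ht
  have hopt := isMinOn_iff.1 hmin _ hq
  have : t * (G p - G u) ≤ t * (⟪v, u - p⟫ + t * C) := by nlinarith
  exact le_of_mul_le_mul_left this ht.1

lemma le_add_inner_add_sq_of_lowerBound_of_lipschitz {Gr : E → E} {τ L t : ℝ}
    (hS : Convex ℝ S)
    (hlow : ∀ a ∈ S, ∀ b ∈ S, F a ≥ F b + ⟪Gr b, a - b⟫ + τ / 2 * ‖a - b‖ ^ 2)
    (hLip : ∀ a b : E, ‖Gr a - Gr b‖ ≤ L * ‖a - b‖)
    (hp : p ∈ S) (hu : u ∈ S) (ht : t ∈ Set.Icc (0 : ℝ) 1) :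
    F (p + t • (u - p)) ≤ F p + t * ⟪Gr p, u - p⟫ + t ^ 2 * ((L - τ / 2) * ‖u - p‖ ^ 2) := by
  set q := p + t • (u - p)
  have hqp : q - p = t • (u - p) := add_sub_cancel_left p _
  have hlowq := hlow p hp q (hS.add_smul_sub_mem hp hu ht)
  rw [show p - q = -(t • (u - p)) by rw [← hqp, neg_sub], inner_neg_right, norm_neg,
    inner_smul_right, norm_smul, Real.norm_eq_abs, abs_of_nonneg ht.1] at hlowq
  have hgrad : ⟪Gr q - Gr p, u - p⟫ ≤ L * t * ‖u - p‖ ^ 2 := calc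
    ⟪Gr q - Gr p, u - p⟫ ≤ ‖Gr q - Gr p‖ * ‖u - p‖ := real_inner_le_norm _ _
    _ ≤ L * ‖q - p‖ * ‖u - p‖ := mul_le_mul_of_nonneg_right (hLip q p) (norm_nonneg _)
    _ = L * t * ‖u - p‖ ^ 2 := by
      rw [hqp, norm_smul, Real.norm_eq_abs, abs_of_nonneg ht.1]; ring
  rw [inner_sub_left] at hgrad
  nlinarith [mul_le_mul_of_nonneg_left hgrad ht.1]

lemma IsMinOn.sub_le_inner_of_prox {c w : E} (hG : ConvexOn ℝ S G)
    (hmin : IsMinOn (fun z => ⟪c, z - w⟫ + G z + 1 / 2 * ‖z - w‖ ^ 2) S p)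
    (hp : p ∈ S) (hu : u ∈ S) :
    G p - G u ≤ ⟪c + (p - w), u - p⟫ := by
  refine IsMinOn.sub_le_inner_of_convexOn (F := fun z => ⟪c, z - w⟫ + 1 / 2 * ‖z - w‖ ^ 2)
    (C := 1 / 2 * ‖u - p‖ ^ 2) hG ?_ hp hu fun t _ => le_of_eq ?_
  · refine isMinOn_iff.2 fun z hz => ?_
    have := isMinOn_iff.1 hmin z hz
    linarith
  · rw [show p + t • (u - p) - w = (p - w) + t • (u - p) by abel, inner_add_right,
      norm_add_sq_real, inner_smul_right, inner_smul_right, norm_smul, Real.norm_eq_abs, mul_pow,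
      sq_abs, inner_add_left]
    ring

lemma norm_sub_sq_le_of_inner_nonneg {x x' y e : E} {L : ℝ} (hL : 0 ≤ L) (he : ‖e‖ ≤ L * ‖x - x'‖)
    (hvi : 0 ≤ ⟪e + (y - x), x' - y⟫) :
    ‖x - y‖ ^ 2 ≤ (L ^ 2 + 4 * L + 1) * ‖x' - x‖ ^ 2 := by
  set a := ‖x - y‖
  set b := ‖x' - x‖
  have hb : ‖x - x'‖ = b := norm_sub_rev _ _
  have hdist : ‖x' - y‖ ≤ b + a := by
    simpa only [sub_add_sub_cancel] using norm_add_le (x' - x) (x - y)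
  have he' : ⟪e, x' - y⟫ ≤ L * b * (b + a) := calc
    ⟪e, x' - y⟫ ≤ ‖e‖ * ‖x' - y‖ := real_inner_le_norm _ _
    _ ≤ L * b * (b + a) := by
      rw [hb] at he; exact mul_le_mul he hdist (norm_nonneg _) (mul_nonneg hL (norm_nonneg _))
  have hyx : ⟪y - x, x' - y⟫ ≤ b * a - a ^ 2 := by
    rw [← sub_add_sub_cancel x' x y, inner_add_right, ← neg_sub x y, inner_neg_left,
      inner_neg_left, real_inner_self_eq_norm_sq]
    linarith [neg_le_abs (⟪x - y, x' - x⟫), abs_real_inner_le_norm (x - y) (x' - x)]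
  rw [inner_add_left] at hvi
  -- `a² ≤ (L + 1)ab + Lb²`, and `(L + 1)ab ≤ a²/2 + (L + 1)²b²/2`
  nlinarith [sq_nonneg (a - (L + 1) * b), norm_nonneg (x - y), norm_nonneg (x' - x),
    mul_nonneg hL (norm_nonneg (x' - x))]

end FirstOrder

namespace PiLp

variable {ι : Type*} {β : ι → Type*} [∀ i, NormedAddCommGroup (β i)]

lemma norm_le_mul_norm_of_forall [Fintype ι] {a b : PiLp 2 β} {L : ℝ} (hL : 0 ≤ L)
    (h : ∀ i, ‖a i‖ ≤ L * ‖b i‖) : ‖a‖ ≤ L * ‖b‖ := by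
  rw [← sq_le_sq₀ (norm_nonneg _) (by positivity), mul_pow, norm_sq_eq_of_L2, norm_sq_eq_of_L2,
    Finset.mul_sum]
  exact Finset.sum_le_sum fun i _ => by
    rw [← mul_pow]; exact pow_le_pow_left₀ (norm_nonneg _) (h i) 2

lemma convex_setOf_forall_mem [∀ i, Module ℝ (β i)] {X : ∀ i, Set (β i)}
    (hX : ∀ i, Convex ℝ (X i)) :
    Convex ℝ {z : PiLp 2 β | ∀ i, z i ∈ X i} := by
  intro a ha b hb s t hs ht hst i
  simpa using hX i (ha i) (hb i) hs ht hst

lemma convexOn_sum_comp_apply [Fintype ι] [∀ i, Module ℝ (β i)] {g : ∀ i, β i → ℝ}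
    (hg : ∀ i, ConvexOn ℝ Set.univ (g i)) :
    ConvexOn ℝ Set.univ fun z : PiLp 2 β => ∑ i, g i (z i) := by
  refine ⟨convex_univ, fun a _ b _ s t hs ht hst => ?_⟩
  simp only [smul_eq_mul, Finset.mul_sum, ← Finset.sum_add_distrib]
  exact Finset.sum_le_sum fun i _ => by
    simpa using (hg i).2 (Set.mem_univ (a i)) (Set.mem_univ (b i)) hs ht hst

lemma norm_sub_sq_le_of_isMinOn [Fintype ι] [∀ i, InnerProductSpace ℝ (β i)]
    {X : ∀ i, Set (β i)} (hX : ∀ i, Convex ℝ (X i))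
    {g : ∀ i, β i → ℝ} (hg : ∀ i, ConvexOn ℝ Set.univ (g i))
    {F : ∀ i, β i → ℝ} {Gr : ∀ i, β i → β i} {τ L : ℝ} (hL : 0 ≤ L)
    (hlow : ∀ i, ∀ a ∈ X i, ∀ b ∈ X i,
      F i a ≥ F i b + ⟪Gr i b, a - b⟫ + τ / 2 * ‖a - b‖ ^ 2)
    (hLip : ∀ i, ∀ a b : β i, ‖Gr i a - Gr i b‖ ≤ L * ‖a - b‖)
    {x x' y c : PiLp 2 β} (hc : ∀ i, Gr i (x i) = c i)
    (hx' : ∀ i, x' i ∈ X i ∧ IsMinOn (fun u => F i u + g i u) (X i) (x' i))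
    (hy : ∀ i, y i ∈ X i)
    (hymin : IsMinOn (fun z => ⟪c, z - x⟫ + ∑ i, g i (z i) + 1 / 2 * ‖z - x‖ ^ 2)
      {z | ∀ i, z i ∈ X i} y) :
    ‖x - y‖ ^ 2 ≤ (L ^ 2 + 4 * L + 1) * ‖x' - x‖ ^ 2 := by
  set Gx' : PiLp 2 β := WithLp.toLp 2 fun i => Gr i (x' i)
  have hbest : ∀ i, g i (x' i) - g i (y i) ≤ ⟪Gx' i, y i - x' i⟫ := fun i =>
    (hx' i).2.sub_le_inner_of_convexOn ((hg i).subset (Set.subset_univ _) (hX i)) (hx' i).1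
      (hy i) fun _ ht => le_add_inner_add_sq_of_lowerBound_of_lipschitz (hX i) (hlow i)
        (hLip i) (hx' i).1 (hy i) (Set.Ioc_subset_Icc_self ht)
  have hbest_sum : ∑ i, g i (x' i) - ∑ i, g i (y i) ≤ ⟪Gx', y - x'⟫ := by
    rw [inner_apply, ← Finset.sum_sub_distrib]
    exact Finset.sum_le_sum fun i _ => hbest i
  have hprox : ∑ i, g i (y i) - ∑ i, g i (x' i) ≤ ⟪c + (y - x), x' - y⟫ :=
    hymin.sub_le_inner_of_prox ((convexOn_sum_comp_apply hg).subset (Set.subset_univ _)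
      (convex_setOf_forall_mem hX)) hy fun i => (hx' i).1
  refine norm_sub_sq_le_of_inner_nonneg (e := c - Gx') hL ?_ ?_
  · exact norm_le_mul_norm_of_forall hL fun i => by
      simpa [Gx', ← hc i] using hLip i (x i) (x' i)
  · have hflip : ⟪Gx', x' - y⟫ = -⟪Gx', y - x'⟫ := by rw [← inner_neg_right, neg_sub]
    rw [sub_add_eq_add_sub, inner_sub_left, hflip]
    linarith

end PiLp

lemma sum_range_le_div_of_le_sub_mul {H a : ℕ → ℝ} {β b : ℝ} (hβ : 0 < β)
    (hdec : ∀ r, H (r + 1) ≤ H r - β * a r) (hH : ∀ r, b ≤ H r) (T : ℕ) :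
    ∑ r ∈ range T, a r ≤ (H 0 - b) / β := by
  rw [le_div_iff₀ hβ, Finset.sum_mul]
  have hterm : ∀ r ∈ range T, a r * β ≤ H r - H (r + 1) := fun r _ => by linarith [hdec r]
  linarith [Finset.sum_le_sum hterm, Finset.sum_range_sub' H T, hH T]

lemma exists_le_div_of_sum_range_le {s : ℕ → ℝ} {κ : ℝ}
    (h : ∀ T : ℕ, ∑ r ∈ range (T + 1), s r ≤ κ) (T : ℕ) :
    ∃ r ≤ T, s r ≤ κ / (T + 1) := by
  have hconst : ∑ r ∈ range (T + 1), s r ≤ ∑ _r ∈ range (T + 1), κ / (T + 1) := by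
    rw [Finset.sum_const, Finset.card_range, nsmul_eq_mul, Nat.cast_succ,
      mul_div_cancel₀ _ (Nat.cast_add_one_ne_zero T)]
    exact h T
  obtain ⟨r, hr, hsr⟩ := Finset.exists_le_of_sum_le nonempty_range_add_one hconst
  exact ⟨r, Nat.lt_succ_iff.1 (Finset.mem_range.1 hr), hsr⟩

lemma exists_le_of_sum_range_le {s : ℕ → ℝ} {κ : ℝ} (hs : ∀ r, 0 ≤ s r)
    (h : ∀ T : ℕ, ∑ r ∈ range (T + 1), s r ≤ κ) {ε : ℝ} (hε : 0 < ε) :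
    ∃ r : ℕ, (r : ℝ) ≤ κ / ε ∧ s r ≤ ε := by
  have hκ : 0 ≤ κ := (hs 0).trans (by simpa using h 0)
  obtain ⟨r, hrT, hr⟩ := exists_le_div_of_sum_range_le h ⌊κ / ε⌋₊
  refine ⟨r, (Nat.cast_le.2 hrT).trans (Nat.floor_le (by positivity)), hr.trans ?_⟩
  rw [div_le_iff₀ (by positivity), ← div_le_iff₀' hε]
  exact (Nat.lt_floor_add_one _).le

theorem stmt16_general
    {n : ℕ} {m : Fin n → ℕ}
    (X : ∀ j, Set (EuclideanSpace ℝ (Fin (m j))))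
    (hXcv : ∀ j, Convex ℝ (X j))
    (f : TS n m → ℝ)
    (g : ∀ j, EuclideanSpace ℝ (Fin (m j)) → ℝ) (hg : ∀ j, ConvexOn ℝ Set.univ (g j))
    -- `h^* = inf_{x ∈ X} h(x) > −∞`, where `h = f + Σ_i g_i`
    (hstar : ℝ)
    (hinf : IsGLB ((fun z => f z + ∑ i, g i (z i)) '' {z : TS n m | ∀ j, z j ∈ X j}) hstar)
    (ft : ∀ j, EuclideanSpace ℝ (Fin (m j)) → TS n m → ℝ)
    (τ : ℝ)
    -- `f̃_i(·, y)` is continuously differentiable and `τ`-strongly convex on `X_i`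
    (hsc : ∀ i, ∀ y : TS n m, (∀ j, y j ∈ X j) → ∀ u ∈ X i, ∀ u' ∈ X i,
      ft i u y ≥ ft i u' y + ⟪gradient (fun v => ft i v y) u', u - u'⟫ + τ / 2 * ‖u - u'‖ ^ 2)
    -- gradient consistency: `∇_{x_i} f̃_i(x_i, x) = ∇_{x_i} f(x)` for all `x ∈ X`
    (hgc : ∀ i, ∀ y : TS n m, (∀ j, y j ∈ X j) →
      gradient (fun u => ft i u y) (y i) = gradient f y i)
    -- `∇_{x_i} f̃_i(·, x)` is Lipschitz with constant `L = max_i L_i`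
    (L : ℝ) (hftLip : ∀ i, ∀ y : TS n m, (∀ j, y j ∈ X j) →
      ∀ u v : EuclideanSpace ℝ (Fin (m i)),
      ‖gradient (fun w => ft i w y) u - gradient (fun w => ft i w y) v‖ ≤ L * ‖u - v‖)
    -- an arbitrary sequence `(x^r) ⊆ X` and its best responses `x̂^r`
    (x : ℕ → TS n m) (hx : ∀ r j, x r j ∈ X j)
    (xhat : ℕ → TS n m)
    (hxhat : ∀ r i, xhat r i ∈ X i ∧
      IsMinOn (fun u => ft i u (x r) + g i u) (X i) (xhat r i))
    -- the sufficient-descent condition with constant `β̂ > 0`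
    (β : ℝ) (hβ : 0 < β)
    (hdec : ∀ r, f (x (r + 1)) + ∑ i, g i (x (r + 1) i) ≤
      f (x r) + ∑ i, g i (x r i) - β * ‖xhat r - x r‖ ^ 2)
    -- the proximal points `y^r` defining `∇̃h(x^r) = x^r − y^r`
    (y : ℕ → TS n m) (hyX : ∀ r j, y r j ∈ X j)
    (hy : ∀ r, IsMinOn
      (fun z => ⟪gradient f (x r), z - x r⟫ + (∑ i, g i (z i)) + 1 / 2 * ‖z - x r‖ ^ 2)
      {z : TS n m | ∀ j, z j ∈ X j} (y r))
    -- the constant `κ`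
    (κ : ℝ)
    (hκ : κ = 2 * (L ^ 2 + 2 * L + 2) * ((f (x 0) + ∑ i, g i (x 0 i)) - hstar) / β) :
    (∀ T : ℕ, ∑ r ∈ Finset.range (T + 1), ‖x r - y r‖ ^ 2 ≤ κ) ∧
    (∀ T : ℕ, ∃ r ≤ T, ‖x r - y r‖ ^ 2 ≤ κ / (T + 1)) ∧
    (∀ ε : ℝ, 0 < ε → ∃ r : ℕ, (r : ℝ) ≤ κ / ε ∧ ‖x r - y r‖ ^ 2 ≤ ε) := by
  set h : ℕ → ℝ := fun r => f (x r) + ∑ i, g i (x r i)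
  -- the per-step estimate needs a nonnegative Lipschitz constant, so `L` is replaced by `max L 0`
  set K := max L 0 ^ 2 + 4 * max L 0 + 1
  have hKκ : K ≤ 2 * (L ^ 2 + 2 * L + 2) := by
    rcases le_total L 0 with hL | hL
    · simp only [K, max_eq_right hL]; nlinarith [sq_nonneg (L + 1)]
    · simp only [K, max_eq_left hL]; nlinarith
  have hstep : ∀ r, ‖x r - y r‖ ^ 2 ≤ K * ‖xhat r - x r‖ ^ 2 := fun r =>
    PiLp.norm_sub_sq_le_of_isMinOn (F := fun i u => ft i u (x r))
      (Gr := fun i => gradient fun v => ft i v (x r)) hXcv hg (le_max_right L 0)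
      (fun i => hsc i (x r) (hx r))
      (fun i u v => (hftLip i (x r) (hx r) u v).trans
        (mul_le_mul_of_nonneg_right (le_max_left L 0) (norm_nonneg _)))
      (fun i => hgc i (x r) (hx r)) (hxhat r) (hyX r) (hy r)
  have hdescent : ∀ T, ∑ r ∈ range (T + 1), ‖xhat r - x r‖ ^ 2 ≤ (h 0 - hstar) / β :=
    fun T => sum_range_le_div_of_le_sub_mul hβ hdec (fun r => hinf.1 ⟨x r, hx r, rfl⟩) (T + 1)
  have hsum : ∀ T : ℕ, ∑ r ∈ range (T + 1), ‖x r - y r‖ ^ 2 ≤ κ := fun T => calc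
    ∑ r ∈ range (T + 1), ‖x r - y r‖ ^ 2
      ≤ K * ∑ r ∈ range (T + 1), ‖xhat r - x r‖ ^ 2 := by
        rw [Finset.mul_sum]; exact Finset.sum_le_sum fun r _ => hstep r
    _ ≤ 2 * (L ^ 2 + 2 * L + 2) * ((h 0 - hstar) / β) :=
        mul_le_mul hKκ (hdescent T) (Finset.sum_nonneg fun _ _ => sq_nonneg _)
          (by nlinarith [sq_nonneg (L + 1)])
    _ = κ := by rw [hκ, mul_div_assoc]
  exact ⟨hsum, exists_le_div_of_sum_range_le hsum,
    fun ε hε => exists_le_of_sum_range_le (fun _ => sq_nonneg _) hsum hε⟩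

/-- **deterministic form of Theorem 3.** Under the sufficient-descent
condition `h(x^{r+1}) ≤ h(x^r) − β̂‖x̂^r − x^r‖²`, the proximal gradients
`∇̃h(x^r) = x^r − y^r` satisfy `Σ_{r=0}^T ‖∇̃h(x^r)‖² ≤ κ` with
`κ = 2(L² + 2L + 2)(h(x⁰) − h^*)/β̂`; in particular
`min_{0 ≤ r ≤ T} ‖∇̃h(x^r)‖² ≤ κ/(T+1)`, and the first index `T_ε` with
`‖∇̃h(x^{T_ε})‖² ≤ ε` satisfies `T_ε ≤ κ/ε`. -/
theorem stmt16
    {n : ℕ} {m : Fin n → ℕ}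
    (X : ∀ j, Set (EuclideanSpace ℝ (Fin (m j))))
    (hXne : ∀ j, (X j).Nonempty) (hXcl : ∀ j, IsClosed (X j)) (hXcv : ∀ j, Convex ℝ (X j))
    (f : TS n m → ℝ) (hf : ContDiff ℝ 1 f)
    (g : ∀ j, EuclideanSpace ℝ (Fin (m j)) → ℝ) (hg : ∀ j, ConvexOn ℝ Set.univ (g j))
    -- `h^* = inf_{x ∈ X} h(x) > −∞`, where `h = f + Σ_i g_i`
    (hstar : ℝ)
    (hinf : IsGLB ((fun z => f z + ∑ i, g i (z i)) '' {z : TS n m | ∀ j, z j ∈ X j}) hstar)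
    (ft : ∀ j, EuclideanSpace ℝ (Fin (m j)) → TS n m → ℝ)
    (τ : ℝ) (hτ : 0 < τ)
    -- `f̃_i(·, y)` is continuously differentiable and `τ`-strongly convex on `X_i`
    (hC1 : ∀ i, ∀ y : TS n m, (∀ j, y j ∈ X j) → ContDiff ℝ 1 fun u => ft i u y)
    (hsc : ∀ i, ∀ y : TS n m, (∀ j, y j ∈ X j) → ∀ u ∈ X i, ∀ u' ∈ X i,
      ft i u y ≥ ft i u' y + ⟪gradient (fun v => ft i v y) u', u - u'⟫ + τ / 2 * ‖u - u'‖ ^ 2)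
    -- gradient consistency: `∇_{x_i} f̃_i(x_i, x) = ∇_{x_i} f(x)` for all `x ∈ X`
    (hgc : ∀ i, ∀ y : TS n m, (∀ j, y j ∈ X j) →
      gradient (fun u => ft i u y) (y i) = gradient f y i)
    -- `∇_{x_i} f̃_i(·, x)` is Lipschitz with constant `L = max_i L_i`
    (L : ℝ) (hftLip : ∀ i, ∀ y : TS n m, (∀ j, y j ∈ X j) →
      ∀ u v : EuclideanSpace ℝ (Fin (m i)),
      ‖gradient (fun w => ft i w y) u - gradient (fun w => ft i w y) v‖ ≤ L * ‖u - v‖)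
    -- an arbitrary sequence `(x^r) ⊆ X` and its best responses `x̂^r`
    (x : ℕ → TS n m) (hx : ∀ r j, x r j ∈ X j)
    (xhat : ℕ → TS n m)
    (hxhat : ∀ r i, xhat r i ∈ X i ∧
      IsMinOn (fun u => ft i u (x r) + g i u) (X i) (xhat r i))
    -- the sufficient-descent condition with constant `β̂ > 0`
    (β : ℝ) (hβ : 0 < β)
    (hdec : ∀ r, f (x (r + 1)) + ∑ i, g i (x (r + 1) i) ≤
      f (x r) + ∑ i, g i (x r i) - β * ‖xhat r - x r‖ ^ 2)
    -- the proximal points `y^r` defining `∇̃h(x^r) = x^r − y^r`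
    (y : ℕ → TS n m) (hyX : ∀ r j, y r j ∈ X j)
    (hy : ∀ r, IsMinOn
      (fun z => ⟪gradient f (x r), z - x r⟫ + (∑ i, g i (z i)) + 1 / 2 * ‖z - x r‖ ^ 2)
      {z : TS n m | ∀ j, z j ∈ X j} (y r))
    -- the constant `κ`
    (κ : ℝ)
    (hκ : κ = 2 * (L ^ 2 + 2 * L + 2) * ((f (x 0) + ∑ i, g i (x 0 i)) - hstar) / β) :
    (∀ T : ℕ, ∑ r ∈ Finset.range (T + 1), ‖x r - y r‖ ^ 2 ≤ κ) ∧
    (∀ T : ℕ, ∃ r ≤ T, ‖x r - y r‖ ^ 2 ≤ κ / (T + 1)) ∧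
    (∀ ε : ℝ, 0 < ε → ∃ r : ℕ, (r : ℝ) ≤ κ / ε ∧ ‖x r - y r‖ ^ 2 ≤ ε) :=
  stmt16_general X hXcv f g hg hstar hinf ft τ hsc hgc L hftLip x hx xhat hxhat β hβ hdec y hyX hy κ
    hκ
end
end
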